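/- arXiv:math/0511735 — 2 statements merged into one kernel-verified Lean document; each statement's English description precedes it below -/
import Mathlib

section
/- Suppose Ω satisfies Condition (*). In the polynomial ring ℤ[u_1,…,u_{k+2}], the ideal generated by the elements ρ_{abc} = ε^a_b·u_a·u_b + ε^b_c·u_b·u_c + ε^c_a·u_c·u_a (a,b,c ∈ {1,…,k+2} distinct) contains the elements u_p·u_q·u_r, ε^p_q·u_p²·u_q − ε^p_r·u_p²·u_r, and u_p²·u_q², for all distinct p,q,r ∈ {1,…,k+2}. -/
/-!
Let `K` be the antisymmetric matrix of signed minors `K_{xy} = ± Δ_{xy}`, signed so that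
`ε^x_y = -sign K_{xy}`. Laplace expansion of a `(k+1) × (k+1)` matrix with a repeated column puts
every row of `K` in the left kernel of `Ω`, and since `Δ_{cd} ≠ 0` a left-kernel vector vanishing
at `c` and `d` is zero. Applied to `K_{cd} K_a - K_{ad} K_c + K_{ac} K_d`, this gives the Plücker
relation `K_{ab} K_{cd} - K_{ac} K_{bd} + K_{ad} K_{bc} = 0`; its three terms are nonzero, which
forces `ε^a_b ε^c_d - ε^a_c ε^b_d + ε^a_d ε^b_c = ±1`. Modulo the `ρ`'s, `u_c ρ_{abd}`,
`u_b ρ_{acd}` and `u_a ρ_{bcd}` combine to exactly this sign times `u_a u_b u_c`, so any fourth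
index `d` puts `u_a u_b u_c` in the ideal. The other two families then follow from `u_p ρ_{pqr}`
and `ε^p_q u_p u_q ρ_{pqr}`.
-/

open Finset

/-- Determinant of the submatrix of `Ω` obtained by deleting the rows in `s`. -/
noncomputable def minorDet (k : ℕ) (Ω : Matrix (Fin (k + 2)) (Fin k) ℤ)
    (s : Finset (Fin (k + 2))) : ℤ :=
  if h : sᶜ.card = k then (Ω.submatrix (sᶜ.orderEmbOfFin h) id).det else 0

/-- `Δ_{pq}`: determinant of `Ω` with rows `p` and `q` deleted. -/
noncomputable def Delta (k : ℕ) (Ω : Matrix (Fin (k + 2)) (Fin k) ℤ) (p q : Fin (k + 2)) : ℤ :=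
  minorDet k Ω {p, q}

theorem Delta_symm (k : ℕ) (Ω : Matrix (Fin (k + 2)) (Fin k) ℤ) (p q : Fin (k + 2)) :
    Delta k Ω p q = Delta k Ω q p := by
  unfold Delta; rw [Finset.pair_comm]

/-- Condition (*). -/
def CondStar (k : ℕ) (Ω : Matrix (Fin (k + 2)) (Fin k) ℤ) : Prop :=
  (∀ p q : Fin (k + 2), p ≠ q → Delta k Ω p q ≠ 0) ∧
  (∀ p : Fin (k + 2), (Finset.univ.erase p).gcd (fun q => (Delta k Ω p q).natAbs) = 1)

/-- The sign `ε^p_q`. -/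
noncomputable def eps (k : ℕ) (Ω : Matrix (Fin (k + 2)) (Fin k) ℤ) (p q : Fin (k + 2)) : ℤ :=
  (-1) ^ ((p : ℕ) + (q : ℕ)) * Int.sign ((p : ℤ) - (q : ℤ)) * Int.sign (Delta k Ω p q)

/-- `v_p = Σ_i Ω_{pi} x_i`. -/
noncomputable def vP (k : ℕ) (Ω : Matrix (Fin (k + 2)) (Fin k) ℤ) (p : Fin (k + 2)) :
    MvPolynomial (Fin k) ℤ :=
  ∑ i : Fin k, MvPolynomial.C (Ω p i) * MvPolynomial.X i

/-- `ρ_{abc} = ε^a_b u_a u_b + ε^b_c u_b u_c + ε^c_a u_c u_a` in `ℤ[u_1,…,u_{k+2}]`. -/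
noncomputable def rho (k : ℕ) (Ω : Matrix (Fin (k + 2)) (Fin k) ℤ) (a b c : Fin (k + 2)) :
    MvPolynomial (Fin (k + 2)) ℤ :=
  MvPolynomial.C (eps k Ω a b) * MvPolynomial.X a * MvPolynomial.X b +
  MvPolynomial.C (eps k Ω b c) * MvPolynomial.X b * MvPolynomial.X c +
  MvPolynomial.C (eps k Ω c a) * MvPolynomial.X c * MvPolynomial.X a

/-- The ideal generated by the `ρ_{abc}` for `a, b, c` distinct. -/
noncomputable def rhoIdeal (k : ℕ) (Ω : Matrix (Fin (k + 2)) (Fin k) ℤ) :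
    Ideal (MvPolynomial (Fin (k + 2)) ℤ) :=
  Ideal.span {g | ∃ a b c : Fin (k + 2), a ≠ b ∧ b ≠ c ∧ a ≠ c ∧ g = rho k Ω a b c}

open MvPolynomial Matrix

theorem Int.isUnit_sign_sub_sign_add_sign {x y z : ℤ} (hx : x ≠ 0) (hy : y ≠ 0) (hz : z ≠ 0)
    (h : x - y + z = 0) : IsUnit (x.sign - y.sign + z.sign) := by
  rw [Int.isUnit_iff]
  rcases hx.lt_or_gt with hx | hx <;> rcases hy.lt_or_gt with hy | hy <;>
    rcases hz.lt_or_gt with hz | hz <;>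
    simp only [Int.sign_eq_one_of_pos, Int.sign_eq_neg_one_of_neg, *] <;> omega

theorem pfaffian_mul_eq_zero_of_rho {ι A : Type*} [CommRing A] (ε : ι → ι → A)
    (hε : ∀ x y, ε y x = -ε x y) (u : ι → A)
    (hρ : ∀ x y z, x ≠ y → y ≠ z → x ≠ z →
      ε x y * u x * u y + ε y z * u y * u z + ε z x * u z * u x = 0)
    {a b c d : ι} (hab : a ≠ b) (hac : a ≠ c) (had : a ≠ d) (hbc : b ≠ c) (hbd : b ≠ d)
    (hcd : c ≠ d) :
    (ε a b * ε c d - ε a c * ε b d + ε a d * ε b c) * (u a * u b * u c) = 0 := by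
  linear_combination ε c d * u c * hρ a b d hab hbd had - ε b d * u b * hρ a c d hac hcd had +
    ε a d * u a * hρ b c d hbc hcd hbd - ε c d * u a * u c * u d * hε a d
    - ε a d * u a * u b * u d * hε b d + ε b d * u a * u b * u d * hε a d

theorem Fin.neg_one_pow_mul_sign_succAbove {n : ℕ} (x : Fin (n + 1)) (r : Fin n) :
    (-1 : ℤ) ^ (x.succAbove r : ℕ) * ((x.succAbove r : ℤ) - x).sign = -(-1) ^ (r : ℕ) := by
  rcases lt_or_ge r.castSucc x with h | h
  · rw [Fin.succAbove_of_castSucc_lt _ _ h]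
    have : (r : ℕ) < x := h
    have : (r : ℤ) - x < 0 := by omega
    simp [Int.sign_eq_neg_one_of_neg this]
  · rw [Fin.succAbove_of_le_castSucc _ _ h]
    have : (x : ℕ) ≤ r := h
    have : 0 < ((r : ℕ) + 1 : ℤ) - x := by omega
    simp [Int.sign_eq_one_of_pos this, pow_succ]

theorem Fin.exists_ne_ne_ne {n : ℕ} (hn : 4 ≤ n) (p q r : Fin n) :
    ∃ s, p ≠ s ∧ q ≠ s ∧ r ≠ s := by
  obtain ⟨s, hs⟩ : ({p, q, r}ᶜ : Finset (Fin n)).Nonempty := by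
    rw [← card_pos, card_compl, Fintype.card_fin]
    have := card_le_three (a := p) (b := q) (c := r)
    omega
  simp only [mem_compl, mem_insert, mem_singleton, not_or] at hs
  exact ⟨s, Ne.symm hs.1, Ne.symm hs.2.1, Ne.symm hs.2.2⟩

section SignedMinor

variable (k : ℕ) (Ω : Matrix (Fin (k + 2)) (Fin k) ℤ)

noncomputable def signedMinor (x y : Fin (k + 2)) : ℤ :=
  (-1) ^ ((x : ℕ) + y) * ((y : ℤ) - x).sign * Delta k Ω x y

theorem signedMinor_self (x : Fin (k + 2)) : signedMinor k Ω x x = 0 := by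
  simp [signedMinor]

theorem signedMinor_antisymm (x y : Fin (k + 2)) :
    signedMinor k Ω y x = -signedMinor k Ω x y := by
  rw [signedMinor, signedMinor, Delta_symm k Ω y x, add_comm (y : ℕ), ← neg_sub (y : ℤ),
    Int.sign_neg]
  ring

theorem signedMinor_ne_zero {x y : Fin (k + 2)} (hxy : x ≠ y) (hΔ : Delta k Ω x y ≠ 0) :
    signedMinor k Ω x y ≠ 0 := by
  have : ((y : ℤ) - x).sign ≠ 0 := by
    rw [Ne, Int.sign_eq_zero_iff_zero, sub_eq_zero]
    exact_mod_cast fun h => hxy (Fin.ext h).symm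
  exact mul_ne_zero (mul_ne_zero (pow_ne_zero _ (by norm_num)) this) hΔ

theorem eps_eq_neg_sign_signedMinor (x y : Fin (k + 2)) :
    eps k Ω x y = -(signedMinor k Ω x y).sign := by
  rw [eps, signedMinor, Int.sign_mul, Int.sign_mul, Int.sign_sign, ← neg_sub (x : ℤ),
    Int.sign_neg]
  rcases neg_one_pow_eq_or ℤ ((x : ℕ) + y) with h | h <;> simp [h]

theorem eps_antisymm (x y : Fin (k + 2)) : eps k Ω y x = -eps k Ω x y := by
  simp [eps_eq_neg_sign_signedMinor, signedMinor_antisymm k Ω x y]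

theorem eps_mul_eps (x y z w : Fin (k + 2)) :
    eps k Ω x y * eps k Ω z w = (signedMinor k Ω x y * signedMinor k Ω z w).sign := by
  simp [eps_eq_neg_sign_signedMinor, Int.sign_mul]

theorem eps_mul_self {x y : Fin (k + 2)} (hxy : x ≠ y) (hΔ : Delta k Ω x y ≠ 0) :
    eps k Ω x y * eps k Ω x y = 1 := by
  rw [eps_mul_eps]
  exact Int.sign_eq_one_of_pos (mul_self_pos.mpr (signedMinor_ne_zero k Ω hxy hΔ))

theorem Delta_succAbove (x : Fin (k + 2)) (r : Fin (k + 1)) :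
    Delta k Ω x (x.succAbove r) = (Ω.submatrix (x.succAbove ∘ r.succAbove) id).det := by
  have hcard : ({x, x.succAbove r}ᶜ : Finset (Fin (k + 2))).card = k := by
    rw [card_compl, card_pair (Fin.succAbove_ne x r).symm, Fintype.card_fin, Nat.add_sub_cancel]
  have hmem : ∀ t, x.succAbove (r.succAbove t) ∈ ({x, x.succAbove r}ᶜ : Finset (Fin (k + 2))) := by
    intro t
    simp only [mem_compl, mem_insert, mem_singleton, not_or]
    exact ⟨Fin.succAbove_ne x _, fun h => Fin.succAbove_ne r t (Fin.succAbove_right_injective h)⟩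
  rw [Delta, minorDet, dif_pos hcard, ← orderEmbOfFin_unique hcard hmem
    ((Fin.strictMono_succAbove x).comp (Fin.strictMono_succAbove r))]
  rfl

theorem signedMinor_succAbove (x : Fin (k + 2)) (r : Fin (k + 1)) :
    signedMinor k Ω x (x.succAbove r) = -(-1) ^ ((x : ℕ) + r) * Delta k Ω x (x.succAbove r) := by
  rw [signedMinor, pow_add, mul_assoc ((-1) ^ (x : ℕ)), Fin.neg_one_pow_mul_sign_succAbove,
    pow_add]
  ring

theorem signedMinor_vecMul (x : Fin (k + 2)) : signedMinor k Ω x ᵥ* Ω = 0 := by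
  ext i
  set B := Ω.submatrix x.succAbove (Fin.cases i id)
  have hB : B.det = 0 := det_zero_of_column_eq (Fin.succ_ne_zero i).symm fun _ => rfl
  calc (signedMinor k Ω x ᵥ* Ω) i
      = ∑ r, signedMinor k Ω x (x.succAbove r) * Ω (x.succAbove r) i := by
        rw [vecMul, dotProduct, Fin.sum_univ_succAbove _ x, signedMinor_self, zero_mul, zero_add]
    _ = -(-1) ^ (x : ℕ) * B.det := by
        rw [det_succ_column_zero, mul_sum]
        refine sum_congr rfl fun r _ => ?_
        have hminor :
            B.submatrix r.succAbove Fin.succ = Ω.submatrix (x.succAbove ∘ r.succAbove) id := rfl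
        rw [signedMinor_succAbove, Delta_succAbove, hminor, pow_add]
        simp only [B, submatrix_apply, Fin.cases_zero]
        ring
    _ = 0 := by rw [hB, mul_zero]

end SignedMinor

section Pluecker

variable {k : ℕ} {Ω : Matrix (Fin (k + 2)) (Fin k) ℤ}

theorem eq_zero_of_vecMul_eq_zero_of_Delta_ne_zero {c d : Fin (k + 2)} (hΔ : Delta k Ω c d ≠ 0)
    {u : Fin (k + 2) → ℤ} (hu : u ᵥ* Ω = 0) (hc : u c = 0) (hd : u d = 0) : u = 0 := by
  have hcard : ({c, d}ᶜ : Finset (Fin (k + 2))).card = k := by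
    by_contra h
    exact hΔ (by rw [Delta, minorDet, dif_neg h])
  set e := ({c, d}ᶜ : Finset (Fin (k + 2))).orderEmbOfFin hcard
  have hsupp : ∀ y ∉ ({c, d}ᶜ : Finset (Fin (k + 2))), u y = 0 := by
    simp only [mem_compl, not_not, mem_insert, mem_singleton]
    rintro y (rfl | rfl) <;> assumption
  have hue : (u ∘ e) ᵥ* Ω.submatrix e id = 0 := by
    ext i
    calc ((u ∘ e) ᵥ* Ω.submatrix e id) i = ∑ y ∈ {c, d}ᶜ, u y * Ω y i := by
          rw [← map_orderEmbOfFin_univ _ hcard, sum_map]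
          rfl
      _ = (u ᵥ* Ω) i := sum_subset (subset_univ _) fun y _ hy => by rw [hsupp y hy, zero_mul]
      _ = 0 := by rw [hu, Pi.zero_apply]
  have hdet : (Ω.submatrix e id).det ≠ 0 := by rwa [Delta, minorDet, dif_pos hcard] at hΔ
  have he : u ∘ e = 0 := by
    by_contra h
    exact hdet (exists_vecMul_eq_zero_iff.mp ⟨_, h, hue⟩)
  ext y
  by_cases hy : y ∈ ({c, d}ᶜ : Finset (Fin (k + 2)))
  · obtain ⟨j, rfl⟩ : y ∈ Set.range e := by rwa [range_orderEmbOfFin]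
    exact congrFun he j
  · exact hsupp y hy

theorem signedMinor_pluecker (a b : Fin (k + 2)) {c d : Fin (k + 2)} (hΔ : Delta k Ω c d ≠ 0) :
    signedMinor k Ω a b * signedMinor k Ω c d - signedMinor k Ω a c * signedMinor k Ω b d +
      signedMinor k Ω a d * signedMinor k Ω b c = 0 := by
  set K := signedMinor k Ω
  set w := K c d • K a - K a d • K c + K a c • K d
  have hw : w = 0 := by
    refine eq_zero_of_vecMul_eq_zero_of_Delta_ne_zero hΔ ?_ ?_ ?_
    · simp only [w, add_vecMul, sub_vecMul, smul_vecMul, K, signedMinor_vecMul, smul_zero,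
        sub_zero, add_zero]
    · simp only [w, Pi.add_apply, Pi.sub_apply, Pi.smul_apply, smul_eq_mul, K, signedMinor_self,
        signedMinor_antisymm k Ω c d]
      ring
    · simp only [w, Pi.add_apply, Pi.sub_apply, Pi.smul_apply, smul_eq_mul, K, signedMinor_self]
      ring
  have hb := congrFun hw b
  simp only [w, Pi.add_apply, Pi.sub_apply, Pi.smul_apply, smul_eq_mul, Pi.zero_apply] at hb
  linear_combination hb + K a d * signedMinor_antisymm k Ω b c -
    K a c * signedMinor_antisymm k Ω b d

theorem isUnit_eps_pfaffian (hΔ : ∀ p q, p ≠ q → Delta k Ω p q ≠ 0) {a b c d : Fin (k + 2)}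
    (hab : a ≠ b) (hac : a ≠ c) (had : a ≠ d) (hbc : b ≠ c) (hbd : b ≠ d) (hcd : c ≠ d) :
    IsUnit (eps k Ω a b * eps k Ω c d - eps k Ω a c * eps k Ω b d +
      eps k Ω a d * eps k Ω b c) := by
  have hK {x y} (hxy : x ≠ y) := signedMinor_ne_zero k Ω hxy (hΔ x y hxy)
  simp only [eps_mul_eps]
  exact Int.isUnit_sign_sub_sign_add_sign (mul_ne_zero (hK hab) (hK hcd))
    (mul_ne_zero (hK hac) (hK hbd)) (mul_ne_zero (hK had) (hK hbc))
    (signedMinor_pluecker a b (hΔ c d hcd))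

end Pluecker

/-- The ideal generated by the `ρ_{abc}` contains `u_p u_q u_r`,
`ε^p_q u_p² u_q - ε^p_r u_p² u_r`, and `u_p² u_q²`, for all distinct `p, q, r`. -/
theorem rhoIdeal_contains (k : ℕ) (hk : 2 ≤ k) (Ω : Matrix (Fin (k + 2)) (Fin k) ℤ)
    (hΩ : CondStar k Ω) (p q r : Fin (k + 2)) (hpq : p ≠ q) (hqr : q ≠ r) (hpr : p ≠ r) :
    (MvPolynomial.X p * MvPolynomial.X q * MvPolynomial.X r ∈ rhoIdeal k Ω) ∧
    (MvPolynomial.C (eps k Ω p q) * (MvPolynomial.X p) ^ 2 * MvPolynomial.X q -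
      MvPolynomial.C (eps k Ω p r) * (MvPolynomial.X p) ^ 2 * MvPolynomial.X r
        ∈ rhoIdeal k Ω) ∧
    ((MvPolynomial.X p) ^ 2 * (MvPolynomial.X q) ^ 2 ∈ rhoIdeal k Ω) := by
  obtain ⟨s, hps, hqs, hrs⟩ := Fin.exists_ne_ne_ne (by omega) p q r
  simp only [← Ideal.Quotient.eq_zero_iff_mem, map_sub, map_mul, map_pow]
  set π := Ideal.Quotient.mk (rhoIdeal k Ω)
  set ε : Fin (k + 2) → Fin (k + 2) → _ := fun x y => π (C (eps k Ω x y))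
  set u : Fin (k + 2) → _ := fun x => π (X x)
  have hε x y : ε y x = -ε x y := by simp only [ε, eps_antisymm k Ω x y, map_neg]
  have hρ x y z (hxy : x ≠ y) (hyz : y ≠ z) (hxz : x ≠ z) :
      ε x y * u x * u y + ε y z * u y * u z + ε z x * u z * u x = 0 := by
    have hmem : rho k Ω x y z ∈ rhoIdeal k Ω := Ideal.subset_span ⟨x, y, z, hxy, hyz, hxz, rfl⟩
    simpa only [rho, ← Ideal.Quotient.eq_zero_iff_mem, map_add, map_mul] using hmem
  have hpfaff := pfaffian_mul_eq_zero_of_rho ε hε u hρ hpq hpr hps hqr hqs hrs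
  have hunit := (isUnit_eps_pfaffian hΩ.1 hpq hpr hps hqr hqs hrs).map (π.comp C)
  simp only [RingHom.comp_apply, map_add, map_sub, map_mul] at hunit
  have hcube : u p * u q * u r = 0 := hunit.mul_right_eq_zero.mp hpfaff
  have hεpq : ε p q * ε p q = 1 := by
    rw [← map_mul, ← map_mul, eps_mul_self k Ω hpq (hΩ.1 p q hpq), C_1, map_one]
  refine ⟨hcube, ?_, ?_⟩
  · linear_combination u p * hρ p q r hpq hqr hpr - ε q r * hcube - u p ^ 2 * u r * hε p r
  · linear_combination ε p q * u p * u q * hρ p q r hpq hqr hpr - u p ^ 2 * u q ^ 2 * hεpq -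
      ε p q * (ε q r * u q + ε r p * u p) * hcube
end

section
/- Let n ≥ 1 and define μ : ℍ^n → ℍ^n by μ(x)_p = (star x_p)·i·x_p. Then: (1) if Σ_{p=1}^n ‖x_p‖² = 1, then every component of μ(x) is purely imaginary and Σ_{p=1}^n ‖μ(x)_p‖ = 1; conversely, for every s ∈ ℍ^n with each s_p purely imaginary and Σ_{p=1}^n ‖s_p‖ = 1, there exists x ∈ ℍ^n with Σ_{p=1}^n ‖x_p‖² = 1 and μ(x) = s; (2) if Σ_p ‖x_p‖² = Σ_p ‖y_p‖² = 1, then μ(x) = μ(y) if and only if there exists t ∈ ℍ^n such that each t_p has zero j-component, zero k-component and ‖t_p‖ = 1, and y_p = t_p·x_p for all p. -/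
open Finset
open scoped Quaternion

/-!
Everything is componentwise, for `q ↦ q̄ i q` on `ℍ`. The norm is multiplicative, so
`‖q̄ i q‖ = ‖q‖²`; the image is purely imaginary by direct computation, and a preimage of a
purely imaginary `s` is written down explicitly. For `x ≠ 0`, `x` and `y` have the same image
iff `t = y x⁻¹` is a unit with `t̄ i t = i`, i.e. a unit commuting with `i`, i.e. a unit
complex number.
-/

/-- The imaginary unit `i` of the quaternions. -/
def qI : ℍ := ⟨0, 1, 0, 0⟩

/-- A quaternion is a *unit complex* quaternion if its `j`- and `k`-components vanish
and it has norm `1`. -/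
def IsUnitComplexQ (z : ℍ) : Prop := z.imJ = 0 ∧ z.imK = 0 ∧ ‖z‖ = 1

/-- The moment map `μ : ℍ^n → ℍ^n`, `μ(x)_p = (star x_p)·i·x_p`. -/
noncomputable def muMap (n : ℕ) (x : Fin n → ℍ) : Fin n → ℍ := fun p => star (x p) * qI * x p

namespace Quaternion

lemma sq_norm_eq_normSq (q : ℍ) : ‖q‖ ^ 2 = normSq q := by
  rw [sq, normSq_eq_norm_mul_self]

lemma star_mul_self_of_norm_eq_one {t : ℍ} (ht : ‖t‖ = 1) : star t * t = 1 := by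
  rw [star_mul_self, ← sq_norm_eq_normSq, ht, one_pow, coe_one]

lemma self_mul_star_of_norm_eq_one {t : ℍ} (ht : ‖t‖ = 1) : t * star t = 1 := by
  rw [self_mul_star, ← sq_norm_eq_normSq, ht, one_pow, coe_one]

lemma star_mul_mul_mul (t x a : ℍ) :
    star (t * x) * a * (t * x) = star x * (star t * a * t) * x := by
  simp only [star_mul, mul_assoc]

end Quaternion

open Quaternion

@[simp] lemma qI_re : qI.re = 0 := rfl
@[simp] lemma qI_imI : qI.imI = 1 := rfl
@[simp] lemma qI_imJ : qI.imJ = 0 := rfl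
@[simp] lemma qI_imK : qI.imK = 0 := rfl

lemma norm_qI : ‖qI‖ = 1 := by
  refine (pow_eq_one_iff_of_nonneg (norm_nonneg qI) two_ne_zero).1 ?_
  rw [sq_norm_eq_normSq, normSq_def']
  simp

lemma star_mul_qI_mul_eq (q : ℍ) : star q * qI * q =
    ⟨0, q.re ^ 2 + q.imI ^ 2 - q.imJ ^ 2 - q.imK ^ 2,
      2 * (q.imI * q.imJ - q.re * q.imK), 2 * (q.re * q.imJ + q.imI * q.imK)⟩ := by
  ext <;> simp [re_mul, imI_mul, imJ_mul, imK_mul] <;> ring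

lemma re_star_mul_qI_mul (q : ℍ) : (star q * qI * q).re = 0 := by
  rw [star_mul_qI_mul_eq]

lemma norm_star_mul_qI_mul (q : ℍ) : ‖star q * qI * q‖ = ‖q‖ ^ 2 := by
  rw [norm_mul, norm_mul, norm_star, norm_qI, mul_one, sq]

-- The map `q ↦ q̄ i q` restricted to the 3-sphere is the Hopf fibration, which has no
-- continuous section; hence the case split at `s = ‖s‖ i`.
lemma exists_star_mul_qI_mul_eq {s : ℍ} (hs : s.re = 0) : ∃ q : ℍ, star q * qI * q = s := by
  set r := ‖s‖
  have hr : r ^ 2 = s.imI ^ 2 + s.imJ ^ 2 + s.imK ^ 2 := by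
    rw [sq_norm_eq_normSq, normSq_def', hs]; ring
  have hr0 : 0 ≤ r := norm_nonneg s
  rcases (show s.imI ≤ r by nlinarith [sq_nonneg s.imJ, sq_nonneg s.imK]).lt_or_eq
    with hlt | heq
  · set c := √((r - s.imI) / 2)
    have hc2 : c ^ 2 = (r - s.imI) / 2 := Real.sq_sqrt (by linarith)
    have hc0 : 0 < c := Real.sqrt_pos.mpr (by linarith)
    refine ⟨show ℍ from ⟨s.imK / (2 * c), s.imJ / (2 * c), c, 0⟩, ?_⟩
    rw [star_mul_qI_mul_eq]
    ext <;> simp only [hs] <;> field_simp <;> nlinarith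
  · have hJ : s.imJ = 0 := by nlinarith [sq_nonneg s.imJ, sq_nonneg s.imK]
    have hK : s.imK = 0 := by nlinarith [sq_nonneg s.imJ, sq_nonneg s.imK]
    refine ⟨show ℍ from ⟨√r, 0, 0, 0⟩, ?_⟩
    rw [star_mul_qI_mul_eq]
    ext <;> simp [hs, hJ, hK, heq, Real.sq_sqrt hr0]

lemma commute_qI_iff (t : ℍ) : Commute t qI ↔ t.imJ = 0 ∧ t.imK = 0 := by
  constructor
  · intro h
    have hJ := congrArg QuaternionAlgebra.imJ h.eq
    have hK := congrArg QuaternionAlgebra.imK h.eq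
    simp only [imJ_mul, imK_mul, qI_re, qI_imI, qI_imJ, qI_imK] at hJ hK
    constructor <;> linarith
  · rintro ⟨hJ, hK⟩
    ext <;> simp [re_mul, imI_mul, imJ_mul, imK_mul, hJ, hK]

lemma star_mul_qI_mul_self_eq_qI_iff {t : ℍ} (ht : ‖t‖ = 1) :
    star t * qI * t = qI ↔ Commute t qI := by
  constructor
  · intro h
    calc t * qI = t * (star t * qI * t) := by rw [h]
      _ = (t * star t) * qI * t := by simp only [mul_assoc]
      _ = qI * t := by rw [self_mul_star_of_norm_eq_one ht, one_mul]
  · intro h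
    rw [mul_assoc, ← h.eq, ← mul_assoc, star_mul_self_of_norm_eq_one ht, one_mul]

lemma isUnitComplexQ_iff (t : ℍ) : IsUnitComplexQ t ↔ ‖t‖ = 1 ∧ star t * qI * t = qI := by
  constructor
  · rintro ⟨hJ, hK, ht⟩
    exact ⟨ht, (star_mul_qI_mul_self_eq_qI_iff ht).2 ((commute_qI_iff t).2 ⟨hJ, hK⟩)⟩
  · rintro ⟨ht, hfix⟩
    obtain ⟨hJ, hK⟩ := (commute_qI_iff t).1 ((star_mul_qI_mul_self_eq_qI_iff ht).1 hfix)
    exact ⟨hJ, hK, ht⟩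

lemma star_mul_qI_mul_eq_iff (x y : ℍ) :
    star x * qI * x = star y * qI * y ↔ ∃ t : ℍ, IsUnitComplexQ t ∧ y = t * x := by
  constructor
  · intro h
    have hxy : ‖x‖ = ‖y‖ := by
      have := congrArg norm h
      rw [norm_star_mul_qI_mul, norm_star_mul_qI_mul] at this
      exact (sq_eq_sq₀ (norm_nonneg x) (norm_nonneg y)).1 this
    rcases eq_or_ne x 0 with rfl | hx
    · refine ⟨1, ⟨rfl, rfl, norm_one⟩, ?_⟩
      rw [norm_zero, eq_comm, norm_eq_zero] at hxy
      rw [hxy, mul_zero]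
    · refine ⟨y * x⁻¹, (isUnitComplexQ_iff _).2 ⟨?_, ?_⟩, by rw [inv_mul_cancel_right₀ hx]⟩
      · rw [norm_mul, norm_inv, ← hxy, mul_inv_cancel₀ (norm_ne_zero_iff.2 hx)]
      · have hsx : star x ≠ 0 := star_ne_zero.2 hx
        calc star (y * x⁻¹) * qI * (y * x⁻¹)
            = (star x)⁻¹ * (star y * qI * y) * x⁻¹ := by
              simp only [star_mul, star_inv₀, mul_assoc]
          _ = qI := by
              rw [← h, mul_assoc, mul_assoc, mul_assoc, mul_inv_cancel₀ hx, mul_one,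
                inv_mul_cancel_left₀ hsx]
  · rintro ⟨t, ht, rfl⟩
    rw [star_mul_mul_mul, ((isUnitComplexQ_iff t).1 ht).2]

theorem muMap_properties_general (n : ℕ) :
    (∀ x : Fin n → ℍ, (∑ p : Fin n, ‖x p‖ ^ 2 = 1) →
      ((∀ p, (muMap n x p).re = 0) ∧ ∑ p : Fin n, ‖muMap n x p‖ = 1)) ∧
    (∀ s : Fin n → ℍ, (∀ p, (s p).re = 0) → (∑ p : Fin n, ‖s p‖ = 1) →
      ∃ x : Fin n → ℍ, (∑ p : Fin n, ‖x p‖ ^ 2 = 1) ∧ muMap n x = s) ∧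
    (∀ x y : Fin n → ℍ, (∑ p : Fin n, ‖x p‖ ^ 2 = 1) → (∑ p : Fin n, ‖y p‖ ^ 2 = 1) →
      (muMap n x = muMap n y ↔
        ∃ t : Fin n → ℍ, (∀ p, IsUnitComplexQ (t p)) ∧ ∀ p, y p = t p * x p)) := by
  refine ⟨fun x hx => ⟨fun p => re_star_mul_qI_mul (x p), ?_⟩, fun s hs hsum => ?_,
    fun x y _ _ => ?_⟩
  · simpa only [muMap, norm_star_mul_qI_mul] using hx
  · choose q hq using fun p => exists_star_mul_qI_mul_eq (hs p)
    refine ⟨q, ?_, funext hq⟩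
    simpa only [← norm_star_mul_qI_mul, hq] using hsum
  · simp only [funext_iff, muMap, star_mul_qI_mul_eq_iff, Classical.skolem, forall_and]

/-- Properties of `μ`: (1) it maps the unit sphere onto the set of purely imaginary
tuples `s` with `Σ ‖s_p‖ = 1`; (2) on the unit sphere, its fibres are exactly the
orbits of the diagonal action of tuples of unit complex quaternions. -/
theorem muMap_properties (n : ℕ) (hn : 1 ≤ n) :
    (∀ x : Fin n → ℍ, (∑ p : Fin n, ‖x p‖ ^ 2 = 1) →
      ((∀ p, (muMap n x p).re = 0) ∧ ∑ p : Fin n, ‖muMap n x p‖ = 1)) ∧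
    (∀ s : Fin n → ℍ, (∀ p, (s p).re = 0) → (∑ p : Fin n, ‖s p‖ = 1) →
      ∃ x : Fin n → ℍ, (∑ p : Fin n, ‖x p‖ ^ 2 = 1) ∧ muMap n x = s) ∧
    (∀ x y : Fin n → ℍ, (∑ p : Fin n, ‖x p‖ ^ 2 = 1) → (∑ p : Fin n, ‖y p‖ ^ 2 = 1) →
      (muMap n x = muMap n y ↔
        ∃ t : Fin n → ℍ, (∀ p, IsUnitComplexQ (t p)) ∧ ∀ p, y p = t p * x p)) :=
  muMap_properties_general n
end
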